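/- arXiv:1802.08098 — 7 statements merged into one kernel-verified Lean document; each statement's English description precedes it below -/
import Mathlib

section
/- Let $E$ be a complex Banach space and $f$ a bounded holomorphic function on the open unit ball $B_E$ with $\sup_{x \in B_E}|f(x)| \leq 1$. Then for every $x_0 \in B_E$, $(1-\|x_0\|)\|f'(x_0)\| \leq 1 - |f(x_0)|^2$, where $f'(x_0) \in E^*$ is the Fréchet derivative and $\|f'(x_0)\|$ its operator norm. -/
/-!
Compose `f` with the disc automorphism `z ↦ (z - a) / (1 - ā z)`, `a = f x₀`, which preserves
the unit disc, sends `a` to `0` and has derivative `1 / (1 - |a|²)` at `a`. The Schwarz lemma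
on the ball of radius `1 - ‖x₀‖` around `x₀` bounds the derivative of the composite at `x₀` by
`1 / (1 - ‖x₀‖)`. If instead `|f| = 1` somewhere in the ball, then `f` is constant by the maximum
modulus principle.
-/

open Metric Set Filter
open scoped ComplexConjugate Topology

namespace Complex

noncomputable def blaschkeFactor (a z : ℂ) : ℂ :=
  (z - a) / (1 - conj a * z)

variable {a z : ℂ}

theorem sq_norm_one_sub_conj_mul_sub_sq_norm_sub (a z : ℂ) :
    ‖1 - conj a * z‖ ^ 2 - ‖z - a‖ ^ 2 = (1 - ‖a‖ ^ 2) * (1 - ‖z‖ ^ 2) := by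
  simp only [← normSq_eq_norm_sq, normSq_apply, sub_re, sub_im, mul_re, mul_im, conj_re, conj_im,
    one_re, one_im]
  ring

theorem one_sub_conj_mul_ne_zero (ha : ‖a‖ < 1) (hz : ‖z‖ < 1) : 1 - conj a * z ≠ 0 := by
  refine sub_ne_zero.mpr fun h => ?_
  have : ‖conj a * z‖ < 1 := by
    rw [norm_mul, RCLike.norm_conj]
    exact mul_lt_one_of_nonneg_of_lt_one_left (norm_nonneg a) ha hz.le
  simp [← h] at this

theorem norm_blaschkeFactor_lt_one (ha : ‖a‖ < 1) (hz : ‖z‖ < 1) :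
    ‖blaschkeFactor a z‖ < 1 := by
  have hden := one_sub_conj_mul_ne_zero ha hz
  rw [blaschkeFactor, norm_div, div_lt_one (norm_pos_iff.mpr hden), ← sq_lt_sq₀ (norm_nonneg _)
    (norm_nonneg _), ← sub_pos, sq_norm_one_sub_conj_mul_sub_sq_norm_sub]
  exact mul_pos (by nlinarith [norm_nonneg a]) (by nlinarith [norm_nonneg z])

theorem blaschkeFactor_self (a : ℂ) : blaschkeFactor a a = 0 := by
  simp [blaschkeFactor]

theorem differentiableOn_blaschkeFactor (ha : ‖a‖ < 1) :
    DifferentiableOn ℂ (blaschkeFactor a) (ball 0 1) := fun _ hz =>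
  ((differentiableAt_id.sub_const a).div ((differentiableAt_id.const_mul _).const_sub 1)
    (one_sub_conj_mul_ne_zero ha (mem_ball_zero_iff.mp hz))).differentiableWithinAt

theorem hasDerivAt_blaschkeFactor_self (ha : ‖a‖ < 1) :
    HasDerivAt (blaschkeFactor a) (1 - ‖a‖ ^ 2 : ℂ)⁻¹ a := by
  have hden : 1 - conj a * a ≠ 0 := one_sub_conj_mul_ne_zero ha ha
  refine (((hasDerivAt_id a).sub_const a).div
    (((hasDerivAt_id a).const_mul (conj a)).const_sub 1) hden).congr_deriv ?_
  rw [conj_mul'] at hden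
  simp only [id_eq, sub_self, zero_mul, sub_zero, one_mul, conj_mul']
  field_simp

section SchwarzPick

variable {E : Type*} [NormedAddCommGroup E] [NormedSpace ℂ E] {f : E → ℂ} {c : E} {r : ℝ}

theorem mul_norm_fderiv_le_one_sub_sq_of_mapsTo_ball (hd : DifferentiableOn ℂ f (ball c r))
    (h_maps : MapsTo f (ball c r) (ball 0 1)) (hr : 0 < r) :
    r * ‖fderiv ℂ f c‖ ≤ 1 - ‖f c‖ ^ 2 := by
  have hc : c ∈ ball c r := mem_ball_self hr
  set a := f c
  have ha : ‖a‖ < 1 := mem_ball_zero_iff.mp (h_maps hc)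
  have ha' : 0 < 1 - ‖a‖ ^ 2 := by nlinarith [norm_nonneg a]
  have hfc : HasFDerivAt f (fderiv ℂ f c) c :=
    (hd.differentiableAt (isOpen_ball.mem_nhds hc)).hasFDerivAt
  have hschwarz : ‖fderiv ℂ (blaschkeFactor a ∘ f) c‖ ≤ 1 / r := by
    refine norm_fderiv_le_div_of_mapsTo_ball
      ((differentiableOn_blaschkeFactor ha).comp hd h_maps) (fun x hx => ?_) hr
    rw [Function.comp_apply, blaschkeFactor_self, mem_closedBall_zero_iff]
    exact (norm_blaschkeFactor_lt_one ha (mem_ball_zero_iff.mp (h_maps hx))).le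
  have hnorm : ‖(1 - ‖a‖ ^ 2 : ℂ)‖ = 1 - ‖a‖ ^ 2 := by
    rw [← ofReal_pow, ← ofReal_one, ← ofReal_sub, norm_real, Real.norm_of_nonneg ha'.le]
  rw [((hasDerivAt_blaschkeFactor_self ha).comp_hasFDerivAt c hfc).fderiv, norm_smul, norm_inv,
    hnorm, inv_mul_le_iff₀ ha', mul_one_div, le_div_iff₀ hr] at hschwarz
  linarith

theorem mul_norm_fderiv_le_one_sub_sq_of_mapsTo_closedBall (hd : DifferentiableOn ℂ f (ball c r))
    (h_maps : MapsTo f (ball c r) (closedBall 0 1)) (hr : 0 < r) :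
    r * ‖fderiv ℂ f c‖ ≤ 1 - ‖f c‖ ^ 2 := by
  by_cases h_open : MapsTo f (ball c r) (ball 0 1)
  · exact mul_norm_fderiv_le_one_sub_sq_of_mapsTo_ball hd h_open hr
  obtain ⟨z, hz, hfz⟩ : ∃ z ∈ ball c r, 1 ≤ ‖f z‖ := by
    simpa [MapsTo, mem_ball_zero_iff] using h_open
  have hmax : IsMaxOn (norm ∘ f) (ball c r) z := isMaxOn_iff.mpr fun x hx =>
    (mem_closedBall_zero_iff.mp (h_maps hx)).trans hfz
  have hconst : f =ᶠ[𝓝 c] fun _ => f z :=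
    eventually_of_mem (isOpen_ball.mem_nhds (mem_ball_self hr))
      (eqOn_of_isPreconnected_of_isMaxOn_norm (convex_ball c r).isPreconnected isOpen_ball hd hz
        hmax)
  have hfc : ‖f c‖ ≤ 1 := mem_closedBall_zero_iff.mp (h_maps (mem_ball_self hr))
  rw [hconst.fderiv_eq, fderiv_const_apply, norm_zero, mul_zero, sub_nonneg]
  exact pow_le_one₀ (norm_nonneg _) hfc

end SchwarzPick

end Complex

theorem schwarz_pick_ball_general {E : Type*} [NormedAddCommGroup E] [NormedSpace ℂ E]
    (f : E → ℂ)
    (hf : DifferentiableOn ℂ f (ball (0 : E) 1))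
    (hb : ∀ x ∈ ball (0 : E) 1, ‖f x‖ ≤ 1) :
    ∀ x₀ ∈ ball (0 : E) 1,
      (1 - ‖x₀‖) * ‖fderiv ℂ f x₀‖ ≤ 1 - ‖f x₀‖ ^ 2 := by
  intro x₀ hx₀
  have hsub : ball x₀ (1 - ‖x₀‖) ⊆ ball 0 1 :=
    ball_subset_ball' (by rw [dist_zero_right, sub_add_cancel])
  exact Complex.mul_norm_fderiv_le_one_sub_sq_of_mapsTo_closedBall (hf.mono hsub)
    (fun x hx => mem_closedBall_zero_iff.mpr (hb x (hsub hx)))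
    (sub_pos.mpr (mem_ball_zero_iff.mp hx₀))

/-- Schwarz–Pick type estimate on the unit ball of a complex Banach space: if
`f` is holomorphic on `B_E` with `|f| ≤ 1`, then
`(1 - ‖x₀‖) ‖f'(x₀)‖ ≤ 1 - |f(x₀)|²` for every `x₀ ∈ B_E`. -/
theorem schwarz_pick_ball {E : Type*} [NormedAddCommGroup E] [NormedSpace ℂ E] [CompleteSpace E]
    (f : E → ℂ)
    (hf : DifferentiableOn ℂ f (ball (0 : E) 1))
    (hb : ∀ x ∈ ball (0 : E) 1, ‖f x‖ ≤ 1) :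
    ∀ x₀ ∈ ball (0 : E) 1,
      (1 - ‖x₀‖) * ‖fderiv ℂ f x₀‖ ≤ 1 - ‖f x₀‖ ^ 2 :=
  schwarz_pick_ball_general f hf hb
end

section
/- Let $E$ be a complex Banach space and $f$ a bounded holomorphic function on $B_E$. Then $\sup_{x \in B_E}(1-\|x\|^2)\|f'(x)\| \leq 2 \sup_{x \in B_E}|f(x)|$; in particular every bounded holomorphic function on $B_E$ belongs to the natural Bloch space $\mathcal{B}_{nat}(B_E)$. -/
open Metric Set Filter Topology

/-!
Restricting `f` to the complex line `z ↦ x + z • v` through `x` gives a holomorphic function on a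
disc of radius `(1 - ‖x‖) / ‖v‖` bounded by `M = sup ‖f‖`, so Cauchy's estimate yields
`(1 - ‖x‖) ‖f'(x)‖ ≤ M`; multiplying by `1 + ‖x‖ ≤ 2` gives the claim.
-/

section CauchyEstimate

variable {E F : Type*} [NormedAddCommGroup E] [NormedSpace ℂ E]
  [NormedAddCommGroup F] [NormedSpace ℂ F]

theorem Complex.norm_deriv_le_of_forall_mem_ball_norm_le {f : ℂ → F} {c : ℂ} {R C : ℝ}
    (hR : 0 < R) (hd : DifferentiableOn ℂ f (ball c R)) (hC : ∀ z ∈ ball c R, ‖f z‖ ≤ C) :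
    ‖deriv f c‖ ≤ C / R := by
  -- Cauchy's estimate needs continuity up to the boundary: apply it on smaller discs, let `ρ → R`.
  have h_lt : ∀ ρ ∈ Ioo 0 R, ‖deriv f c‖ * ρ ≤ C := fun ρ ⟨hρ₀, hρR⟩ =>
    (le_div_iff₀ hρ₀).1 <| Complex.norm_deriv_le_of_forall_mem_sphere_norm_le hρ₀
      ((hd.mono (closedBall_subset_ball hρR)).diffContOnCl_ball le_rfl)
      fun z hz => hC z (sphere_subset_closedBall.trans (closedBall_subset_ball hρR) hz)
  rw [le_div_iff₀ hR]
  refine le_of_tendsto (((continuous_const.mul continuous_id).tendsto R).mono_left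
    (nhdsWithin_le_nhds (s := Iio R))) ?_
  filter_upwards [Ioo_mem_nhdsLT hR] using h_lt

theorem Complex.norm_fderiv_le_of_forall_mem_ball_norm_le {f : E → F} {c : E} {R C : ℝ}
    (hR : 0 < R) (hd : DifferentiableOn ℂ f (ball c R)) (hC : ∀ y ∈ ball c R, ‖f y‖ ≤ C) :
    ‖fderiv ℂ f c‖ ≤ C / R := by
  have hC₀ : 0 ≤ C := (norm_nonneg _).trans (hC c (mem_ball_self hR))
  refine ContinuousLinearMap.opNorm_le_bound _ (by positivity) fun v => ?_
  rcases eq_or_ne v 0 with rfl | hv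
  · simp
  have hv₀ : 0 < ‖v‖ := norm_pos_iff.2 hv
  have h_line : MapsTo (fun z : ℂ => c + z • v) (ball 0 (R / ‖v‖)) (ball c R) := fun z hz => by
    rw [mem_ball_zero_iff, lt_div_iff₀ hv₀] at hz
    simpa [norm_smul] using hz
  have h_deriv : HasDerivAt (f ∘ fun z : ℂ => c + z • v) (fderiv ℂ f c v) 0 := by
    have hf : HasFDerivAt f (fderiv ℂ f c) (c + (0 : ℂ) • v) := by
      simpa using (hd.differentiableAt (ball_mem_nhds c hR)).hasFDerivAt
    have h_line_deriv : HasDerivAt (fun z : ℂ => c + z • v) v 0 := by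
      simpa using ((hasDerivAt_id (0 : ℂ)).smul_const v).const_add c
    exact hf.comp_hasDerivAt 0 h_line_deriv
  have h_slice := Complex.norm_deriv_le_of_forall_mem_ball_norm_le (div_pos hR hv₀)
    (hd.comp (by fun_prop) h_line) fun z hz => hC _ (h_line hz)
  rw [h_deriv.deriv] at h_slice
  calc ‖fderiv ℂ f c v‖ ≤ C / (R / ‖v‖) := h_slice
    _ = C / R * ‖v‖ := by field_simp

end CauchyEstimate

theorem hinf_subset_nat_bloch_general {E : Type*} [NormedAddCommGroup E] [NormedSpace ℂ E]
    (f : E → ℂ)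
    (hf : DifferentiableOn ℂ f (ball (0 : E) 1))
    (hbd : BddAbove ((fun x => ‖f x‖) '' ball (0 : E) 1)) :
    ∀ x ∈ ball (0 : E) 1,
      (1 - ‖x‖ ^ 2) * ‖fderiv ℂ f x‖ ≤
        2 * sSup ((fun x => ‖f x‖) '' ball (0 : E) 1) := by
  intro x hx
  set M := sSup ((fun x => ‖f x‖) '' ball (0 : E) 1)
  have hx₁ : ‖x‖ < 1 := mem_ball_zero_iff.1 hx
  have hM : ∀ y ∈ ball (0 : E) 1, ‖f y‖ ≤ M := fun y hy => le_csSup hbd ⟨y, hy, rfl⟩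
  have h_ball : ball x (1 - ‖x‖) ⊆ ball 0 1 := ball_subset_ball' (by simp)
  have h_cauchy : ‖fderiv ℂ f x‖ ≤ M / (1 - ‖x‖) :=
    Complex.norm_fderiv_le_of_forall_mem_ball_norm_le (by linarith) (hf.mono h_ball)
      fun y hy => hM y (h_ball hy)
  have h_weighted : (1 - ‖x‖) * ‖fderiv ℂ f x‖ ≤ M := by
    rwa [le_div_iff₀ (by linarith), mul_comm] at h_cauchy
  have hM₀ : 0 ≤ M := (norm_nonneg _).trans (hM 0 (mem_ball_self one_pos))
  calc (1 - ‖x‖ ^ 2) * ‖fderiv ℂ f x‖ = (1 + ‖x‖) * ((1 - ‖x‖) * ‖fderiv ℂ f x‖) := by ring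
    _ ≤ 2 * M := mul_le_mul (by linarith) h_weighted (by positivity) zero_le_two

/-- Bounded holomorphic functions on the unit ball of a complex Banach space are
natural Bloch functions: `(1-‖x‖²)‖f'(x)‖ ≤ 2 sup |f|`. -/
theorem hinf_subset_nat_bloch {E : Type*} [NormedAddCommGroup E] [NormedSpace ℂ E]
    [CompleteSpace E] (f : E → ℂ)
    (hf : DifferentiableOn ℂ f (ball (0 : E) 1))
    (hbd : BddAbove ((fun x => ‖f x‖) '' ball (0 : E) 1)) :
    ∀ x ∈ ball (0 : E) 1,
      (1 - ‖x‖ ^ 2) * ‖fderiv ℂ f x‖ ≤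
        2 * sSup ((fun x => ‖f x‖) '' ball (0 : E) 1) :=
  hinf_subset_nat_bloch_general f hf hbd
end

section
/- Let $E$ be an infinite-dimensional complex Banach space, $x_0 \in E$ with $\|x_0\| = 1$, and $L \in E^*$ with $\|L\| = 1$ and $L(x_0) = 1$. Then the function $f(x) = \log(1 - L(x))$ is holomorphic on $B_E$, satisfies $(1-\|x\|^2)\|f'(x)\| \leq 2$ for all $x \in B_E$ (so $f \in \mathcal{B}_{nat}(B_E)$), but $f$ is unbounded on $B_E$. Hence $H^\infty(B_E) \subsetneq \mathcal{B}_{nat}(B_E)$. -/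
open Metric Set Filter

section

variable {E : Type*} [NormedAddCommGroup E] [NormedSpace ℂ E] {L : E →L[ℂ] ℂ} {x : E}

lemma norm_apply_lt_one_of_opNorm_le_one (hL : ‖L‖ ≤ 1) (hx : ‖x‖ < 1) : ‖L x‖ < 1 :=
  (L.le_of_opNorm_le hL x).trans_lt (by rwa [one_mul])

lemma one_sub_apply_mem_slitPlane (hL : ‖L‖ ≤ 1) (hx : ‖x‖ < 1) :
    1 - L x ∈ Complex.slitPlane :=
  Complex.ball_one_subset_slitPlane <| by
    simpa [dist_eq_norm] using norm_apply_lt_one_of_opNorm_le_one hL hx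

lemma hasFDerivAt_log_one_sub_apply (hx : 1 - L x ∈ Complex.slitPlane) :
    HasFDerivAt (fun y => Complex.log (1 - L y)) ((1 - L x)⁻¹ • -L) x :=
  (Complex.hasDerivAt_log hx).comp_hasFDerivAt (f := fun y => 1 - L y) x
    (L.hasFDerivAt.const_sub 1)

lemma norm_fderiv_log_one_sub_apply_le (hL : ‖L‖ ≤ 1) (hx : ‖x‖ < 1) :
    ‖fderiv ℂ (fun y => Complex.log (1 - L y)) x‖ ≤ (1 - ‖x‖)⁻¹ := by
  rw [(hasFDerivAt_log_one_sub_apply (one_sub_apply_mem_slitPlane hL hx)).fderiv]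
  have hdist : 1 - ‖x‖ ≤ ‖1 - L x‖ := by
    have := norm_sub_norm_le (1 : ℂ) (L x)
    have := L.le_of_opNorm_le hL x
    rw [norm_one] at *
    linarith
  calc ‖(1 - L x)⁻¹ • -L‖ = ‖1 - L x‖⁻¹ * ‖L‖ := by rw [norm_smul, norm_neg, norm_inv]
    _ ≤ ‖1 - L x‖⁻¹ * 1 := by gcongr
    _ ≤ (1 - ‖x‖)⁻¹ := by rw [mul_one]; gcongr

lemma one_sub_sq_mul_norm_fderiv_log_one_sub_apply_le (hL : ‖L‖ ≤ 1) (hx : ‖x‖ < 1) :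
    (1 - ‖x‖ ^ 2) * ‖fderiv ℂ (fun y => Complex.log (1 - L y)) x‖ ≤ 2 := by
  have hpos : 0 < 1 - ‖x‖ := by linarith
  calc (1 - ‖x‖ ^ 2) * ‖fderiv ℂ (fun y => Complex.log (1 - L y)) x‖
      ≤ (1 - ‖x‖ ^ 2) * (1 - ‖x‖)⁻¹ := by
        gcongr
        · nlinarith [norm_nonneg x]
        · exact norm_fderiv_log_one_sub_apply_le hL hx
    _ = 1 + ‖x‖ := by field_simp; ring
    _ ≤ 2 := by linarith

lemma log_one_sub_apply_smul_eq {x₀ : E} (hLx₀ : L x₀ = 1) {s : ℝ} (hs : 0 ≤ s) :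
    Complex.log (1 - L (((1 - s : ℝ) : ℂ) • x₀)) = Real.log s := by
  rw [map_smul, hLx₀, smul_eq_mul, mul_one, Complex.ofReal_log hs]
  push_cast
  ring_nf

lemma not_bddAbove_norm_log_one_sub_apply {x₀ : E} (hx₀ : ‖x₀‖ = 1) (hLx₀ : L x₀ = 1) :
    ¬ BddAbove ((fun x => ‖Complex.log (1 - L x)‖) '' ball (0 : E) 1) := by
  rw [not_bddAbove_iff]
  intro M
  -- `log s → -∞` as `s → 0⁺`, and `(1 - s) • x₀` realises `log s`.
  obtain ⟨s, hlog, hs⟩ :=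
    ((Real.tendsto_log_nhdsGT_zero.eventually (eventually_lt_atBot (-M))).and
      (Ioo_mem_nhdsGT zero_lt_one)).exists
  refine ⟨_, ⟨((1 - s : ℝ) : ℂ) • x₀, ?_, rfl⟩, ?_⟩
  · rw [mem_ball_zero_iff, norm_smul, hx₀, mul_one, Complex.norm_real, Real.norm_eq_abs,
      abs_of_pos (by linarith [hs.2])]
    linarith [hs.1]
  · dsimp only
    rw [log_one_sub_apply_smul_eq hLx₀ hs.1.le, Complex.norm_real, Real.norm_eq_abs]
    linarith [neg_abs_le (Real.log s)]

end

theorem hinf_proper_subset_nat_bloch_general {E : Type*} [NormedAddCommGroup E] [NormedSpace ℂ E]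
    (x₀ : E) (hx₀ : ‖x₀‖ = 1) (L : E →L[ℂ] ℂ) (hL : ‖L‖ = 1) (hLx₀ : L x₀ = 1) :
    DifferentiableOn ℂ (fun x => Complex.log (1 - L x)) (ball (0 : E) 1) ∧
    (∀ x ∈ ball (0 : E) 1,
      (1 - ‖x‖ ^ 2) * ‖fderiv ℂ (fun x => Complex.log (1 - L x)) x‖ ≤ 2) ∧
    ¬ BddAbove ((fun x => ‖Complex.log (1 - L x)‖) '' ball (0 : E) 1) := by
  refine ⟨fun x hx => ?_, fun x hx => ?_, not_bddAbove_norm_log_one_sub_apply hx₀ hLx₀⟩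
  · rw [mem_ball_zero_iff] at hx
    exact (hasFDerivAt_log_one_sub_apply
      (one_sub_apply_mem_slitPlane hL.le hx)).differentiableAt.differentiableWithinAt
  · exact one_sub_sq_mul_norm_fderiv_log_one_sub_apply_le hL.le (mem_ball_zero_iff.mp hx)

/-- For an infinite-dimensional complex Banach space `E`, `x₀` of norm one and a
norm-one functional `L` with `L x₀ = 1`, the function `f x = log (1 - L x)` is
holomorphic on `B_E`, satisfies `(1-‖x‖²)‖f'(x)‖ ≤ 2`, but is unbounded on
`B_E`; hence `H^∞(B_E) ⊊ ℬ_nat(B_E)`. -/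
theorem hinf_proper_subset_nat_bloch {E : Type*} [NormedAddCommGroup E] [NormedSpace ℂ E]
    [CompleteSpace E] (hinf : ¬ FiniteDimensional ℂ E)
    (x₀ : E) (hx₀ : ‖x₀‖ = 1) (L : E →L[ℂ] ℂ) (hL : ‖L‖ = 1) (hLx₀ : L x₀ = 1) :
    DifferentiableOn ℂ (fun x => Complex.log (1 - L x)) (ball (0 : E) 1) ∧
    (∀ x ∈ ball (0 : E) 1,
      (1 - ‖x‖ ^ 2) * ‖fderiv ℂ (fun x => Complex.log (1 - L x)) x‖ ≤ 2) ∧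
    ¬ BddAbove ((fun x => ‖Complex.log (1 - L x)‖) '' ball (0 : E) 1) :=
  hinf_proper_subset_nat_bloch_general x₀ hx₀ L hL hLx₀
end

section
/- The function $f(z,w) = (w+1)\log(z-1)$ on the bidisc $\mathbf{D}^2$ (with a fixed branch of $\log$ on $\mathbf{D} - 1$) satisfies $\sup_{(z,w)\in\mathbf{D}^2} (1 - \max(|z|,|w|)^2)\left(|\partial f/\partial z(z,w)| + |\partial f/\partial w(z,w)|\right) < \infty$, i.e. $f$ belongs to the natural Bloch space of the bidisc. -/
/-!
Write `t = ‖z - 1‖` and `A = 1 - max(|z|, |w|)²`. Since `1 - |z|² ≤ 2 (1 - |z|) ≤ 2t`, the weight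
`A` is at most `min 1 (2t)`. This absorbs the pole of `∂f/∂z = (w + 1)/(z - 1)`, since
`|w + 1| ≤ 2`, and the logarithmic singularity of `∂f/∂w = log (z - 1)`, since
`|log (z - 1)| ≤ |log t| + π` and `t |log t|` is bounded on `(0, 1]`.
-/

open Real

section NormedRing

variable {R : Type*} [SeminormedRing R] [NormOneClass R]

lemma one_sub_norm_le_norm_sub_one (z : R) : 1 - ‖z‖ ≤ ‖z - 1‖ := by
  simpa [norm_sub_rev] using norm_sub_norm_le (1 : R) z

lemma one_sub_sq_le_two_mul_norm_sub_one {z : R} {m : ℝ} (hzm : ‖z‖ ≤ m) (hz : ‖z‖ ≤ 1) :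
    1 - m ^ 2 ≤ 2 * ‖z - 1‖ := by
  nlinarith [norm_nonneg z, one_sub_norm_le_norm_sub_one z]

end NormedRing

lemma Complex.norm_log_le (z : ℂ) : ‖Complex.log z‖ ≤ |Real.log ‖z‖| + π := by
  calc ‖Complex.log z‖ ≤ |(Complex.log z).re| + |(Complex.log z).im| :=
        Complex.norm_le_abs_re_add_abs_im _
    _ ≤ |Real.log ‖z‖| + π := by
        rw [Complex.log_re, Complex.log_im]
        exact add_le_add le_rfl (Complex.abs_arg_le_pi z)

lemma Real.mul_abs_log_le_two {a t : ℝ} (ht : 0 < t) (ht2 : t ≤ 2) (ha0 : 0 ≤ a) (ha1 : a ≤ 1)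
    (hat : a ≤ 2 * t) : a * |Real.log t| ≤ 2 := by
  rcases le_or_gt t 1 with ht1 | ht1
  · have hlog : |Real.log t * t| < 1 := abs_log_mul_self_lt t ht ht1
    rw [abs_mul, abs_of_pos ht] at hlog
    nlinarith [abs_nonneg (Real.log t)]
  · have hlog : Real.log t ≤ t - 1 := log_le_sub_one_of_pos ht
    rw [abs_of_nonneg (Real.log_nonneg ht1.le)]
    nlinarith [Real.log_nonneg ht1.le]

/-- The function `f(z,w) = (w+1) log (z-1)` has finite natural Bloch seminorm on
the bidisc. -/
theorem nat_bloch_of_example :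
    ∃ M : ℝ, ∀ z w : ℂ, ‖z‖ < 1 → ‖w‖ < 1 →
      (1 - (max ‖z‖ ‖w‖) ^ 2) *
        (‖(w + 1) / (z - 1)‖ + ‖Complex.log (z - 1)‖) ≤ M := by
  refine ⟨4 + (2 + π), fun z w hz hw => ?_⟩
  set A := 1 - (max ‖z‖ ‖w‖) ^ 2
  set t := ‖z - 1‖
  have hA0 : 0 ≤ A := by
    have := max_lt hz hw
    nlinarith [le_max_left ‖z‖ ‖w‖, norm_nonneg z]
  have hA1 : A ≤ 1 := sub_le_self _ (sq_nonneg _)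
  have hAt : A ≤ 2 * t := one_sub_sq_le_two_mul_norm_sub_one (le_max_left _ _) hz.le
  have ht2 : t ≤ 2 := (norm_sub_le z 1).trans (by rw [norm_one]; linarith)
  have ht : 0 < t := (sub_pos.2 hz).trans_le (one_sub_norm_le_norm_sub_one z)
  have hpole : A * ‖(w + 1) / (z - 1)‖ ≤ 4 := by
    have hw1 : ‖w + 1‖ ≤ 2 := (norm_add_le w 1).trans (by rw [norm_one]; linarith)
    rw [norm_div, ← mul_div_assoc, div_le_iff₀ ht]
    nlinarith [norm_nonneg (w + 1)]
  have hlog : A * ‖Complex.log (z - 1)‖ ≤ 2 + π :=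
    calc A * ‖Complex.log (z - 1)‖ ≤ A * |Real.log t| + A * π := by
          rw [← mul_add]; exact mul_le_mul_of_nonneg_left (Complex.norm_log_le _) hA0
      _ ≤ 2 + π := add_le_add (Real.mul_abs_log_le_two ht ht2 hA0 hA1 hAt)
          (mul_le_of_le_one_left pi_pos.le hA1)
  rw [mul_add]
  exact add_le_add hpole hlog
end

section
/- There exists a holomorphic function on the bidisc $\mathbf{D}^2$ that belongs to the natural Bloch space $\mathcal{B}_{nat}(\mathbf{D}^2)$ but not to the invariant Bloch space $\mathcal{B}_{inv}(\mathbf{D}^2)$; i.e., $\mathcal{B}_{inv}(\mathbf{D}^2) \subsetneq \mathcal{B}_{nat}(\mathbf{D}^2)$. -/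
/-! Take `f(z, w) = z log(1 + w)`. Then `∂_z f = log(1 + w)` and `∂_w f = z / (1 + w)`, and both
blow up at worst like `1 / (1 - |w|)` as `w → -1`. The natural weight satisfies
`1 - max(|z|, |w|)² ≤ 2 (1 - |w|)`, so it tames both partials at once. The invariant weight in
front of `∂_z f` is `1 - |z|²`, which equals `1` on `z = 0`, where `|log(1 + w)|` is unbounded. -/

open Metric Complex

section
variable {𝕜 : Type*} [NontriviallyNormedField 𝕜]

theorem HasDerivAt.hasFDerivAt_fst_mul_comp_snd {g : 𝕜 → 𝕜} {g' : 𝕜} {p : 𝕜 × 𝕜}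
    (hg : HasDerivAt g g' p.2) :
    HasFDerivAt (fun q : 𝕜 × 𝕜 => q.1 * g q.2)
      (g p.2 • ContinuousLinearMap.fst 𝕜 𝕜 𝕜 + (p.1 * g') • ContinuousLinearMap.snd 𝕜 𝕜 𝕜) p := by
  refine (hasFDerivAt_fst.mul (hg.hasFDerivAt.comp p hasFDerivAt_snd)).congr_fderiv ?_
  ext <;> simp [mul_comm]

theorem one_sub_norm_mul_norm_inv_one_add_le_one (w : 𝕜) :
    (1 - ‖w‖) * ‖(1 + w)⁻¹‖ ≤ 1 := by
  have h : 1 - ‖w‖ ≤ ‖1 + w‖ := by simpa using norm_sub_norm_le (1 : 𝕜) (-w)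
  rw [norm_inv]
  exact mul_inv_le_one_of_le₀ h (norm_nonneg _)

end

theorem hasDerivAt_log_one_add {w : ℂ} (hw : ‖w‖ < 1) :
    HasDerivAt (fun u => log (1 + u)) (1 + w)⁻¹ w := by
  simpa using ((hasDerivAt_id w).const_add 1).clog (mem_slitPlane_of_norm_lt_one hw)

theorem one_sub_norm_mul_norm_log_one_add_le_one {w : ℂ} (hw : ‖w‖ < 1) :
    (1 - ‖w‖) * ‖log (1 + w)‖ ≤ 1 := by
  have hpos : 0 < 1 - ‖w‖ := sub_pos.2 hw
  calc (1 - ‖w‖) * ‖log (1 + w)‖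
      ≤ (1 - ‖w‖) * (‖w‖ ^ 2 * (1 - ‖w‖)⁻¹ / 2 + ‖w‖) := by
        gcongr; exact norm_log_one_add_le hw
    _ = ‖w‖ - ‖w‖ ^ 2 / 2 := by field_simp; ring
    _ ≤ 1 := by nlinarith [norm_nonneg w]

theorem exists_norm_lt_one_lt_norm_log_one_add (M : ℝ) :
    ∃ w : ℂ, ‖w‖ < 1 ∧ M < ‖log (1 + w)‖ := by
  set t := |M| + 1
  have ht : 0 < t := by positivity
  refine ⟨(Real.exp (-t) : ℂ) - 1, ?_, ?_⟩
  · rw [← ofReal_one, ← ofReal_sub, norm_real, Real.norm_eq_abs,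
      abs_of_neg (by simpa using ht), neg_sub]
    linarith [Real.exp_pos (-t)]
  · rw [add_sub_cancel, ← ofReal_log (Real.exp_pos _).le, Real.log_exp, norm_real,
      Real.norm_eq_abs, abs_neg, abs_of_pos ht]
    linarith [le_abs_self M]

theorem natural_weight_mul_partials_le {z w : ℂ} (hz : ‖z‖ < 1) (hw : ‖w‖ < 1) :
    (1 - max ‖z‖ ‖w‖ ^ 2) * (‖log (1 + w)‖ + ‖z * (1 + w)⁻¹‖) ≤ 4 := by
  have hweight : 1 - max ‖z‖ ‖w‖ ^ 2 ≤ 2 * (1 - ‖w‖) := by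
    nlinarith [le_max_right ‖z‖ ‖w‖, sq_nonneg (1 - max ‖z‖ ‖w‖)]
  have hlog := one_sub_norm_mul_norm_log_one_add_le_one hw
  have hinv : (1 - ‖w‖) * ‖z * (1 + w)⁻¹‖ ≤ 1 := by
    rw [norm_mul, mul_left_comm]
    exact (mul_le_of_le_one_left (by positivity) hz.le).trans
      (one_sub_norm_mul_norm_inv_one_add_le_one w)
  calc (1 - max ‖z‖ ‖w‖ ^ 2) * (‖log (1 + w)‖ + ‖z * (1 + w)⁻¹‖)
      ≤ 2 * (1 - ‖w‖) * (‖log (1 + w)‖ + ‖z * (1 + w)⁻¹‖) := by gcongr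
    _ ≤ 4 := by linarith

/-- There is a holomorphic function on the bidisc which lies in the natural
Bloch space but not in the invariant Bloch space: `ℬ_inv(𝔻²) ⊊ ℬ_nat(𝔻²)`. -/
theorem inv_bloch_proper_subset_nat_bloch_bidisc :
    ∃ f : ℂ × ℂ → ℂ, DifferentiableOn ℂ f (ball (0 : ℂ × ℂ) 1) ∧
      (∃ M : ℝ, ∀ x ∈ ball (0 : ℂ × ℂ) 1,
        (1 - (max ‖x.1‖ ‖x.2‖) ^ 2) *
          (‖fderiv ℂ f x (1, 0)‖ + ‖fderiv ℂ f x (0, 1)‖) ≤ M) ∧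
      (∀ M : ℝ, ∃ x ∈ ball (0 : ℂ × ℂ) 1,
        M < (1 - ‖x.1‖ ^ 2) * ‖fderiv ℂ f x (1, 0)‖ +
            (1 - ‖x.2‖ ^ 2) * ‖fderiv ℂ f x (0, 1)‖) := by
  have hf {x : ℂ × ℂ} (hx : ‖x.2‖ < 1) :=
    (hasDerivAt_log_one_add hx).hasFDerivAt_fst_mul_comp_snd
  have mem_ball_iff {x : ℂ × ℂ} : x ∈ ball 0 1 ↔ ‖x.1‖ < 1 ∧ ‖x.2‖ < 1 := by
    rw [mem_ball_zero_iff, Prod.norm_def, max_lt_iff]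
  refine ⟨fun x => x.1 * log (1 + x.2), fun x hx => ?_, ⟨4, fun x hx => ?_⟩, fun M => ?_⟩
  · exact (hf (mem_ball_iff.1 hx).2).differentiableAt.differentiableWithinAt
  · obtain ⟨hz, hw⟩ := mem_ball_iff.1 hx
    simpa [(hf hw).fderiv] using natural_weight_mul_partials_le hz hw
  · obtain ⟨w, hw, hM⟩ := exists_norm_lt_one_lt_norm_log_one_add M
    refine ⟨(0, w), mem_ball_iff.2 ⟨by simp, hw⟩, ?_⟩
    simpa [(hf (x := (0, w)) hw).fderiv] using hM
end

section
/- For any complex Banach space $E$ and any $x \in B_E$ with $\|x\| + r < 1$ for some $r > 0$, the pseudohyperbolic distance satisfies $\rho(y,x) \leq \|y-x\|/r$ for all $y \in B(x,r)$, and consequently $\rho(y,x) \leq \|y-x\|/(1-\|x\|)$ for all $y$ with $\|y-x\| < 1-\|x\|$. -/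
open Metric Set

/-- The pseudohyperbolic distance on the unit ball of a complex Banach space. -/
noncomputable def pseudoDist {E : Type*} [NormedAddCommGroup E] [NormedSpace ℂ E]
    (x y : E) : ℝ :=
  sSup {t : ℝ | ∃ f : E → ℂ, DifferentiableOn ℂ f (ball (0 : E) 1) ∧
    (∀ z ∈ ball (0 : E) 1, ‖f z‖ ≤ 1) ∧ f y = 0 ∧ t = ‖f x‖}

/-! Every competitor `f` in the supremum defining `ρ(y, x)` vanishes at `x` and maps the ball
`B(x, s) ⊆ B_E` into the closed unit disc, so the Schwarz lemma on `B(x, s)` gives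
`‖f y‖ ≤ ‖y - x‖ / s`. -/

theorem pseudoDist_le_norm_sub_div {E : Type*} [NormedAddCommGroup E] [NormedSpace ℂ E]
    {x y : E} {s : ℝ} (hs : ‖x‖ + s ≤ 1) (hy : ‖y - x‖ < s) :
    pseudoDist y x ≤ ‖y - x‖ / s := by
  refine Real.sSup_le ?_ (div_nonneg (norm_nonneg _) ((norm_nonneg _).trans hy.le))
  rintro _ ⟨f, hf, hf_le, hfx, rfl⟩
  have hball : ball x s ⊆ ball 0 1 := ball_subset_ball' (by rw [dist_zero_right]; linarith)
  have hmaps : MapsTo f (ball x s) (closedBall (f x) 1) := fun z hz => by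
    simpa [hfx] using hf_le z (hball hz)
  have hschwarz := Complex.dist_le_div_mul_dist_of_mapsTo_ball (hf.mono hball) hmaps
    (mem_ball_iff_norm.2 hy)
  rwa [hfx, dist_zero_right, dist_eq_norm, one_div_mul_eq_div] at hschwarz

theorem pseudoDist_le_general {E : Type*} [NormedAddCommGroup E] [NormedSpace ℂ E]
    (x : E) (r : ℝ) (hxr : ‖x‖ + r < 1) :
    (∀ y : E, ‖y - x‖ < r → pseudoDist y x ≤ ‖y - x‖ / r) ∧
    (∀ y : E, ‖y - x‖ < 1 - ‖x‖ → pseudoDist y x ≤ ‖y - x‖ / (1 - ‖x‖)) :=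
  ⟨fun _ hy => pseudoDist_le_norm_sub_div hxr.le hy,
    fun _ hy => pseudoDist_le_norm_sub_div (by linarith) hy⟩

/-- If `‖x‖ + r < 1` then `ρ(y,x) ≤ ‖y-x‖/r` on `B(x,r)`, and consequently
`ρ(y,x) ≤ ‖y-x‖/(1-‖x‖)` whenever `‖y-x‖ < 1-‖x‖`. -/
theorem pseudoDist_le {E : Type*} [NormedAddCommGroup E] [NormedSpace ℂ E] [CompleteSpace E]
    (x : E) (hx : x ∈ ball (0 : E) 1) (r : ℝ) (hr : 0 < r) (hxr : ‖x‖ + r < 1) :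
    (∀ y : E, ‖y - x‖ < r → pseudoDist y x ≤ ‖y - x‖ / r) ∧
    (∀ y : E, ‖y - x‖ < 1 - ‖x‖ → pseudoDist y x ≤ ‖y - x‖ / (1 - ‖x‖)) :=
  pseudoDist_le_general x r hxr
end

section
/- Let $E$ be an infinite-dimensional complex Banach space and suppose there exists an entire function $f : E \to \mathbb{C}$ bounded on $\frac{1}{2}B_E$ and unbounded on $B(x_0, 1/5)$ for some $x_0$ with $\|x_0\| = 3/4$. Then $\sup_{x \in B_E}(1-\|x\|^2)\|f'(x)\| = \infty$; i.e., $f \notin \mathcal{B}_{nat}(B_E)$. More precisely, if $(x_n) \subset B(x_0,1/5)$ with $|f(x_n)| \to \infty$, there exist $\lambda_n \in [0,1]$ with $(1-\|\lambda_n x_n\|^2)\|f'(\lambda_n x_n)\| \to \infty$. -/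
open Metric Set Filter

/-- An entire function bounded on `½B_E` but unbounded on a ball `B(x₀,1/5)`
with `‖x₀‖ = 3/4` fails to be a natural Bloch function on `B_E`: along a
sequence `(xₙ)` with `|f(xₙ)| → ∞` one finds `λₙ ∈ [0,1]` with
`(1-‖λₙxₙ‖²)‖f'(λₙxₙ)‖ → ∞`. -/
theorem entire_unbounded_not_nat_bloch {E : Type*} [NormedAddCommGroup E]
    [NormedSpace ℂ E] [CompleteSpace E]
    (f : E → ℂ) (hf : Differentiable ℂ f)
    (hb : ∃ C : ℝ, ∀ x ∈ ball (0 : E) (1 / 2), ‖f x‖ ≤ C)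
    (x₀ : E) (hx₀ : ‖x₀‖ = 3 / 4)
    (hub : ¬ BddAbove ((fun x => ‖f x‖) '' ball x₀ (1 / 5)))
    (x : ℕ → E) (hx : ∀ n, x n ∈ ball x₀ (1 / 5))
    (hxf : Tendsto (fun n => ‖f (x n)‖) atTop atTop) :
    (¬ ∃ M : ℝ, ∀ y ∈ ball (0 : E) 1, (1 - ‖y‖ ^ 2) * ‖fderiv ℂ f y‖ ≤ M) ∧
    ∃ lam : ℕ → ℝ, (∀ n, lam n ∈ Icc (0 : ℝ) 1) ∧
      Tendsto (fun n => (1 - ‖lam n • x n‖ ^ 2) * ‖fderiv ℂ f (lam n • x n)‖)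
        atTop atTop := by
  -- norm bound on the sequence
  have hnorm : ∀ n, ‖x n‖ ≤ 19 / 20 := by
    intro n
    have h := hx n
    rw [mem_ball, dist_eq_norm] at h
    have h2 : ‖x n‖ - ‖x₀‖ ≤ ‖x n - x₀‖ := norm_sub_norm_le _ _
    linarith [hx₀ ▸ h2]
  -- choose λₙ by contradiction via the mean value inequality
  have hclaim : ∀ n, ∃ lam ∈ Icc (0 : ℝ) 1,
      ‖f (x n)‖ - ‖f 0‖ ≤ ‖fderiv ℂ f (lam • x n)‖ := by
    intro n
    by_contra hcon
    push_neg at hcon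
    set t := ‖f (x n)‖ - ‖f 0‖ with ht
    have ht0 : 0 < t := by
      have := hcon 0 ⟨le_refl _, zero_le_one⟩
      have h0 : (0 : ℝ) ≤ ‖fderiv ℂ f ((0 : ℝ) • x n)‖ := norm_nonneg _
      linarith
    have hbd : ∀ y ∈ segment ℝ (0 : E) (x n), ‖fderiv ℂ f y‖ ≤ t := by
      intro y hy
      rw [segment_eq_image'] at hy
      obtain ⟨θ, hθ, rfl⟩ := hy
      simp only [zero_add, sub_zero]
      exact le_of_lt (hcon θ hθ)
    have hmv := (convex_segment (0 : E) (x n)).norm_image_sub_le_of_norm_fderiv_le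
      (fun y _ => hf y) hbd (left_mem_segment ℝ 0 (x n))
      (right_mem_segment ℝ 0 (x n))
    rw [sub_zero] at hmv
    have h1 : t ≤ ‖f (x n) - f 0‖ := by
      have := norm_sub_norm_le (f (x n)) (f 0)
      linarith
    have h2 : t * ‖x n‖ ≤ t * (19 / 20) :=
      mul_le_mul_of_nonneg_left (hnorm n) (le_of_lt ht0)
    nlinarith
  choose lam hlam hlam2 using hclaim
  -- key lower bound
  have key : ∀ n, 39 / 400 * (‖f (x n)‖ - ‖f 0‖) ≤
      (1 - ‖lam n • x n‖ ^ 2) * ‖fderiv ℂ f (lam n • x n)‖ := by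
    intro n
    have hs : ‖lam n • x n‖ ≤ 19 / 20 := by
      rw [norm_smul, Real.norm_eq_abs, abs_of_nonneg (hlam n).1]
      calc lam n * ‖x n‖ ≤ 1 * (19 / 20) :=
            mul_le_mul (hlam n).2 (hnorm n) (norm_nonneg _) zero_le_one
        _ = 19 / 20 := one_mul _
    have hD : (0 : ℝ) ≤ ‖fderiv ℂ f (lam n • x n)‖ := norm_nonneg _
    have ht := hlam2 n
    have hsq : 39 / 400 ≤ 1 - ‖lam n • x n‖ ^ 2 := by
      nlinarith [norm_nonneg (lam n • x n)]
    calc 39 / 400 * (‖f (x n)‖ - ‖f 0‖) ≤ 39 / 400 * ‖fderiv ℂ f (lam n • x n)‖ := by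
          linarith [mul_le_mul_of_nonneg_left ht (by norm_num : (0:ℝ) ≤ 39 / 400)]
      _ ≤ (1 - ‖lam n • x n‖ ^ 2) * ‖fderiv ℂ f (lam n • x n)‖ :=
          mul_le_mul_of_nonneg_right hsq hD
  -- the tendsto statement
  have htend : Tendsto (fun n => (1 - ‖lam n • x n‖ ^ 2) * ‖fderiv ℂ f (lam n • x n)‖)
      atTop atTop := by
    apply tendsto_atTop_mono key
    have h1 : Tendsto (fun n => ‖f (x n)‖ - ‖f 0‖) atTop atTop :=
      tendsto_atTop_add_const_right _ (-‖f 0‖) hxf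
    exact h1.const_mul_atTop (by norm_num)
  refine ⟨?_, lam, hlam, htend⟩
  rintro ⟨M, hM⟩
  obtain ⟨n, hn⟩ := (htend.eventually_gt_atTop M).exists
  have hmem : lam n • x n ∈ ball (0 : E) 1 := by
    rw [mem_ball, dist_zero_right]
    have hs : ‖lam n • x n‖ ≤ 19 / 20 := by
      rw [norm_smul, Real.norm_eq_abs, abs_of_nonneg (hlam n).1]
      calc lam n * ‖x n‖ ≤ 1 * (19 / 20) :=
            mul_le_mul (hlam n).2 (hnorm n) (norm_nonneg _) zero_le_one
        _ = 19 / 20 := one_mul _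
    linarith
  exact absurd (hM _ hmem) (not_le.mpr hn)
end
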